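/- arXiv:1704.04130 — 4 statements merged into one kernel-verified Lean document; each statement's English description precedes it below -/
import Mathlib

section
/- On a ring of N nodes, the twisted steady state θ_i* = 2π i m / N with cos(2π m/N) > 0 has a negative semidefinite Jacobian with kernel spanned by the constant vector (i.e., the state is linearly stable up to uniform phase shifts). -/
open Real Matrix

/-- On a ring, the twisted steady state `θ_i* = 2π i m / N` with
`cos(2π m/N) > 0` has a negative semidefinite Jacobian whose kernel is spanned by
the constant vector: the state is linearly stable up to uniform phase shifts. -/
theorem ring_twisted_state_stable (N : ℕ) [NeZero N] (hN : 3 ≤ N)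
    (m : ℤ) (K : ℝ) (hK : 0 < K)
    (hcos : 0 < Real.cos (2 * π * (m : ℝ) / (N : ℝ)))
    (A : ZMod N → ZMod N → ℝ)
    (hA : ∀ i j, A i j = if j = i + 1 ∨ j = i - 1 then 1 else 0)
    (θ : ZMod N → ℝ)
    (hθ : ∀ i, θ i = 2 * π * (i.val : ℝ) * (m : ℝ) / (N : ℝ))
    (J : Matrix (ZMod N) (ZMod N) ℝ)
    (hJoff : ∀ i j, i ≠ j → J i j = K * A i j * Real.cos (θ i - θ j))
    (hJdiag : ∀ i, J i i = -∑ j ∈ Finset.univ.erase i, J i j) :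
    (∀ x : ZMod N → ℝ, x ⬝ᵥ J.mulVec x ≤ 0)
    ∧ (∀ x : ZMod N → ℝ, J.mulVec x = 0 ↔ ∃ c : ℝ, x = fun _ => c) := by
  set c := Real.cos (2 * π * (m : ℝ) / (N : ℝ)) with hc
  have hNR : (N : ℝ) ≠ 0 := Nat.cast_ne_zero.mpr (NeZero.ne N)
  have h1Z : (1 : ZMod N) ≠ 0 := by
    intro h
    have h' : ((1 : ℕ) : ZMod N) = 0 := by exact_mod_cast h
    have := (ZMod.natCast_eq_zero_iff 1 N).mp h'
    have := Nat.le_of_dvd one_pos this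
    omega
  have h2Z : (2 : ZMod N) ≠ 0 := by
    intro h
    have h' : ((2 : ℕ) : ZMod N) = 0 := by exact_mod_cast h
    have := (ZMod.natCast_eq_zero_iff 2 N).mp h'
    have := Nat.le_of_dvd two_pos this
    omega
  -- key cosine computation
  have key : ∀ (i j : ZMod N) (e : ℤ), ((i.val : ℤ) - (j.val : ℤ)) ≡ e [ZMOD (N : ℤ)] →
      Real.cos (θ i - θ j) = Real.cos (2 * π * (m : ℝ) * (e : ℝ) / (N : ℝ)) := by
    intro i j e he
    obtain ⟨t, ht⟩ := he.dvd
    have hval : ((i.val : ℝ) - (j.val : ℝ)) = (e : ℝ) - (N : ℝ) * (t : ℝ) := by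
      have : (e : ℤ) - ((i.val : ℤ) - (j.val : ℤ)) = N * t := ht
      have := congrArg (fun z : ℤ => (z : ℝ)) this
      push_cast at this
      linarith
    have harg : θ i - θ j = 2 * π * (m : ℝ) * (e : ℝ) / (N : ℝ) - ((m * t : ℤ) : ℝ) * (2 * π) := by
      have h0 : θ i - θ j = 2 * π * (m : ℝ) * ((i.val : ℝ) - (j.val : ℝ)) / (N : ℝ) := by
        rw [hθ i, hθ j]; ring
      rw [h0, hval, Int.cast_mul]
      field_simp
    rw [harg, Real.cos_sub_int_mul_two_pi]
  have hsucc : ∀ i : ZMod N, J i (i + 1) = K * c := by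
    intro i
    have hne : i ≠ i + 1 := by
      intro h; exact h1Z (by linear_combination -h)
    rw [hJoff i _ hne, hA, if_pos (Or.inl rfl)]
    have hmod : ((i.val : ℤ) - (((i + 1 : ZMod N)).val : ℤ)) ≡ (-1) [ZMOD (N : ℤ)] := by
      rw [← ZMod.intCast_eq_intCast_iff]
      push_cast [ZMod.natCast_val, ZMod.cast_id]
      ring
    rw [key i (i + 1) (-1) hmod]
    have : 2 * π * (m : ℝ) * ((-1 : ℤ) : ℝ) / (N : ℝ) = -(2 * π * (m : ℝ) / (N : ℝ)) := by
      push_cast; ring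
    rw [this, Real.cos_neg, ← hc]
    ring
  have hpred : ∀ i : ZMod N, J i (i - 1) = K * c := by
    intro i
    have hne : i ≠ i - 1 := by
      intro h; exact h1Z (by linear_combination h)
    rw [hJoff i _ hne, hA, if_pos (Or.inr rfl)]
    have hmod : ((i.val : ℤ) - (((i - 1 : ZMod N)).val : ℤ)) ≡ 1 [ZMOD (N : ℤ)] := by
      rw [← ZMod.intCast_eq_intCast_iff]
      push_cast [ZMod.natCast_val, ZMod.cast_id]
      ring
    rw [key i (i - 1) 1 hmod]
    have : 2 * π * (m : ℝ) * ((1 : ℤ) : ℝ) / (N : ℝ) = 2 * π * (m : ℝ) / (N : ℝ) := by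
      push_cast; ring
    rw [this, ← hc]
    ring
  have hzero : ∀ i j : ZMod N, j ≠ i → j ≠ i + 1 → j ≠ i - 1 → J i j = 0 := by
    intro i j h0 h2 h3
    rw [hJoff i j (Ne.symm h0), hA, if_neg (by tauto)]
    ring
  have hne1 : ∀ i : ZMod N, i ≠ i + 1 := fun i h => h1Z (by linear_combination -h)
  have hne1' : ∀ i : ZMod N, i ≠ i - 1 := fun i h => h1Z (by linear_combination h)
  have hne2 : ∀ i : ZMod N, (i + 1 : ZMod N) ≠ i - 1 := fun i h => h2Z (by linear_combination h)
  have hdiag2 : ∀ i : ZMod N, J i i = -(2 * (K * c)) := by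
    intro i
    rw [hJdiag i]
    have hcongr : ∀ j ∈ Finset.univ.erase i,
        J i j = (if j = i + 1 then K * c else 0) + (if j = i - 1 then K * c else 0) := by
      intro j hj
      have hji : j ≠ i := (Finset.mem_erase.mp hj).1
      by_cases h2 : j = i + 1
      · subst h2
        rw [hsucc, if_pos rfl, if_neg (hne2 i)]; ring
      · by_cases h3 : j = i - 1
        · subst h3
          rw [hpred, if_neg (fun h => hne2 i h.symm), if_pos rfl]; ring
        · rw [hzero i j hji h2 h3, if_neg h2, if_neg h3]; ring
    rw [Finset.sum_congr rfl hcongr, Finset.sum_add_distrib,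
      Finset.sum_ite_eq', Finset.sum_ite_eq']
    rw [if_pos (Finset.mem_erase.mpr ⟨fun h => hne1 i h.symm, Finset.mem_univ _⟩),
      if_pos (Finset.mem_erase.mpr ⟨fun h => hne1' i h.symm, Finset.mem_univ _⟩)]
    ring
  -- explicit mulVec formula
  have hmv : ∀ (x : ZMod N → ℝ) (i : ZMod N),
      J.mulVec x i = K * c * (x (i + 1) + x (i - 1) - 2 * x i) := by
    intro x i
    have hrow : ∀ j : ZMod N, J i j =
        (if j = i then -(2 * (K * c)) else 0) + (if j = i + 1 then K * c else 0)
          + (if j = i - 1 then K * c else 0) := by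
      intro j
      by_cases h0 : j = i
      · subst h0
        rw [if_pos rfl, if_neg (hne1 j), if_neg (hne1' j), hdiag2]; ring
      · by_cases h2 : j = i + 1
        · subst h2
          rw [if_neg h0, if_pos rfl, if_neg (hne2 i), hsucc]; ring
        · by_cases h3 : j = i - 1
          · subst h3
            rw [if_neg h0, if_neg h2, if_pos rfl, hpred]; ring
          · rw [hzero i j h0 h2 h3, if_neg h0, if_neg h2, if_neg h3]; ring
    show ∑ j : ZMod N, J i j * x j = _
    rw [Finset.sum_congr rfl (fun j _ => by rw [hrow j])]
    simp only [add_mul, ite_mul, zero_mul]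
    rw [Finset.sum_add_distrib, Finset.sum_add_distrib,
      Finset.sum_ite_eq', Finset.sum_ite_eq', Finset.sum_ite_eq']
    simp only [Finset.mem_univ, if_pos]
    ring
  have hshift : ∀ f : ZMod N → ℝ, ∑ i : ZMod N, f (i + 1) = ∑ i : ZMod N, f i :=
    fun f => Fintype.sum_equiv (Equiv.addRight 1) _ _ (fun i => rfl)
  have hquad : ∀ x : ZMod N → ℝ,
      x ⬝ᵥ J.mulVec x = -(K * c) * ∑ i : ZMod N, (x i - x (i + 1)) ^ 2 := by
    intro x
    have h1' : x ⬝ᵥ J.mulVec x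
        = ∑ i : ZMod N, x i * (K * c * (x (i + 1) + x (i - 1) - 2 * x i)) := by
      show ∑ i : ZMod N, x i * J.mulVec x i = _
      exact Finset.sum_congr rfl (fun i _ => by rw [hmv x i])
    have e1 : ∑ i : ZMod N, x i * x (i - 1) = ∑ i : ZMod N, x i * x (i + 1) := by
      have := hshift (fun i => x (i + 1) * x i)
      calc ∑ i : ZMod N, x i * x (i - 1)
          = ∑ i : ZMod N, x ((i - 1) + 1) * x (i - 1) := by
            exact Finset.sum_congr rfl (fun i _ => by rw [sub_add_cancel])
        _ = ∑ i : ZMod N, x (i + 1) * x i := by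
            exact Fintype.sum_equiv (Equiv.subRight (1 : ZMod N))
              (fun i => x ((i - 1) + 1) * x (i - 1)) (fun i => x (i + 1) * x i) (fun i => rfl)
        _ = ∑ i : ZMod N, x i * x (i + 1) := Finset.sum_congr rfl (fun i _ => by ring)
    have e2 : ∑ i : ZMod N, (x (i + 1)) ^ 2 = ∑ i : ZMod N, (x i) ^ 2 :=
      hshift (fun i => (x i) ^ 2)
    have lhs_eq : ∑ i : ZMod N, x i * (K * c * (x (i + 1) + x (i - 1) - 2 * x i))
        = K * c * (∑ i : ZMod N, x i * x (i + 1)) + K * c * (∑ i : ZMod N, x i * x (i - 1))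
          - 2 * (K * c) * (∑ i : ZMod N, (x i) ^ 2) := by
      rw [Finset.mul_sum, Finset.mul_sum, Finset.mul_sum, ← Finset.sum_add_distrib,
        ← Finset.sum_sub_distrib]
      exact Finset.sum_congr rfl (fun i _ => by ring)
    have rhs_eq : ∑ i : ZMod N, (x i - x (i + 1)) ^ 2
        = (∑ i : ZMod N, (x i) ^ 2) - 2 * (∑ i : ZMod N, x i * x (i + 1))
          + (∑ i : ZMod N, (x (i + 1)) ^ 2) := by
      rw [Finset.mul_sum, ← Finset.sum_sub_distrib, ← Finset.sum_add_distrib]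
      exact Finset.sum_congr rfl (fun i _ => by ring)
    rw [h1', lhs_eq, rhs_eq, e1, e2]
    ring
  have hKc : 0 < K * c := mul_pos hK hcos
  constructor
  · intro x
    rw [hquad x]
    have hS : 0 ≤ ∑ i : ZMod N, (x i - x (i + 1)) ^ 2 :=
      Finset.sum_nonneg (fun i _ => sq_nonneg _)
    nlinarith
  · intro x
    constructor
    · intro hx
      have hq : x ⬝ᵥ J.mulVec x = 0 := by rw [hx, dotProduct_zero]
      rw [hquad x] at hq
      have hS : ∑ i : ZMod N, (x i - x (i + 1)) ^ 2 = 0 := by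
        rcases mul_eq_zero.mp (by linarith [hq] :
            (K * c) * (∑ i : ZMod N, (x i - x (i + 1)) ^ 2) = 0) with h | h
        · exact absurd h (ne_of_gt hKc)
        · exact h
      have hstep : ∀ i : ZMod N, x (i + 1) = x i := by
        intro i
        have h0 := (Finset.sum_eq_zero_iff_of_nonneg
          (fun i _ => sq_nonneg (x i - x (i + 1)))).mp hS i (Finset.mem_univ i)
        have h1 : x i - x (i + 1) = 0 := by
          have := sq_eq_zero_iff.mp h0
          exact this
        linarith
      have hnat : ∀ n : ℕ, x ((n : ZMod N)) = x 0 := by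
        intro n
        induction n with
        | zero => simp
        | succ k ih =>
          have hcast : ((k + 1 : ℕ) : ZMod N) = (k : ZMod N) + 1 := by push_cast; ring
          rw [hcast, hstep, ih]
      refine ⟨x 0, funext fun i => ?_⟩
      have : ((i.val : ℕ) : ZMod N) = i := ZMod.natCast_rightInverse i
      rw [← this, hnat]
    · rintro ⟨c0, rfl⟩
      funext i
      simp only [hmv, Pi.zero_apply]
      ring
end

section
/- If the symmetric Jacobian J of a stable phase-locked state is negative definite on the orthogonal complement of (1,…,1)^T, with eigenpairs (λ_n, v_n) for n = 2,…,N, then the derivative of the universal order parameter with respect to the coupling strength satisfies dr_uni/dK = (2/(K² Σ_i k_i)) Σ_{n=2}^N (v_n · ω)² / (−λ_n) ≥ 0. -/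
/-!
Differentiating the steady-state equations along the branch shows that `θ' = dθ*/dK` solves
`J (K θ') = ω`, and differentiating `r_uni`, using the symmetry of `A`, gives
`dr_uni/dK = -2 (ω · θ') / (K Σ_i k_i)`. As `J` is symmetric with orthonormal eigenbasis `v`,
expanding in that basis gives `ω · J⁻¹ ω = Σ_{n ≥ 2} (v_n · ω)² / λ_n`, hence the formula; each
term `(v_n · ω)² / (-λ_n)` is nonnegative.
-/

open Matrix Finset Real Filter Topology

namespace Matrix

variable {ι R : Type*} [Fintype ι] [CommRing R]

theorem sum_dotProduct_mul_dotProduct_of_orthonormal [DecidableEq ι] {v : ι → ι → R}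
    (hv : ∀ n p, v n ⬝ᵥ v p = if n = p then 1 else 0) (x y : ι → R) :
    ∑ n, (v n ⬝ᵥ x) * (v n ⬝ᵥ y) = x ⬝ᵥ y := by
  have hVVt : of v * (of v)ᵀ = 1 := by
    ext n p
    exact hv n p
  have hVtV : (of v)ᵀ * of v = 1 := mul_eq_one_comm.mp hVVt
  calc ∑ n, (v n ⬝ᵥ x) * (v n ⬝ᵥ y) = (of v *ᵥ x) ⬝ᵥ (of v *ᵥ y) := rfl
    _ = x ⬝ᵥ y := by
      rw [dotProduct_mulVec, ← mulVec_transpose, mulVec_mulVec, hVtV, one_mulVec]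

theorem IsSymm.dotProduct_mulVec_of_mulVec_eq_smul {J : Matrix ι ι R} (hJ : J.IsSymm)
    {u : ι → R} {μ : R} (hu : J *ᵥ u = μ • u) (x : ι → R) :
    u ⬝ᵥ J *ᵥ x = μ * (u ⬝ᵥ x) := by
  rw [dotProduct_mulVec, ← mulVec_transpose, hJ.eq, hu, smul_dotProduct, smul_eq_mul]

theorem IsSymm.dotProduct_eq_sum_sq_div_of_mulVec_eq {K : Type*} [Field K] [DecidableEq ι]
    {J : Matrix ι ι K} (hJ : J.IsSymm) {v : ι → ι → K}
    (hv : ∀ n p, v n ⬝ᵥ v p = if n = p then 1 else 0) {lam : ι → K}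
    (heig : ∀ n, J *ᵥ v n = lam n • v n) {x w : ι → K} (hx : J *ᵥ x = w) :
    w ⬝ᵥ x = ∑ n, (v n ⬝ᵥ w) ^ 2 / lam n := by
  have hcoef (n : ι) : v n ⬝ᵥ w = lam n * (v n ⬝ᵥ x) := by
    rw [← hx, hJ.dotProduct_mulVec_of_mulVec_eq_smul (heig n)]
  rw [← sum_dotProduct_mul_dotProduct_of_orthonormal hv]
  refine sum_congr rfl fun n _ => ?_
  -- on the kernel of `J` both sides vanish, the right one as `0 / 0`
  rcases eq_or_ne (lam n) 0 with hn | hn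
  · simp [hcoef, hn]
  · rw [hcoef]
    field_simp

theorem mulVec_apply_eq_sum_mul_sub [DecidableEq ι] {J : Matrix ι ι R}
    (hJ : ∀ i, J i i = -∑ j ∈ univ.erase i, J i j) (x : ι → R) (i : ι) :
    (J *ᵥ x) i = ∑ j, J i j * (x j - x i) := by
  have hrow : ∑ j, J i j = 0 := by
    rw [← add_sum_erase _ _ (mem_univ i), hJ i, neg_add_cancel]
  simp only [mulVec, dotProduct, mul_sub, sum_sub_distrib, ← sum_mul, hrow, zero_mul, sub_zero]

end Matrix

theorem sum_sum_mul_sub_of_antisymm {ι R : Type*} [Fintype ι] [CommRing R] {B : ι → ι → R}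
    (hB : ∀ i j, B i j = -B j i) (x : ι → R) :
    ∑ i, ∑ j, B i j * (x i - x j) = 2 * ∑ i, x i * ∑ j, B i j := by
  have hrow : ∑ i, ∑ j, B i j * x i = ∑ i, x i * ∑ j, B i j := by
    simp only [mul_sum, mul_comm]
  have hcol : ∑ i, ∑ j, B i j * x j = -∑ i, x i * ∑ j, B i j := by
    rw [sum_comm, ← sum_neg_distrib]
    refine sum_congr rfl fun j _ => ?_
    rw [mul_sum, ← sum_neg_distrib]
    exact sum_congr rfl fun i _ => by rw [hB]; ring
  simp only [mul_sub, sum_sub_distrib, hrow, hcol]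
  ring

namespace Kuramoto

variable {ι : Type*} {A : ι → ι → ℝ}

theorem jacobian_isSymm {J : Matrix ι ι ℝ} {θ : ι → ℝ} {K₀ : ℝ} (hA : ∀ i j, A i j = A j i)
    (hJoff : ∀ i j, i ≠ j → J i j = K₀ * A i j * cos (θ i - θ j)) : J.IsSymm := by
  refine IsSymm.ext fun i j => ?_
  rcases eq_or_ne i j with rfl | hij
  · rfl
  · rw [hJoff i j hij, hJoff j i hij.symm, hA, ← cos_neg, neg_sub]

variable [Fintype ι]

theorem hasDerivAt_sum_mul_cos_sub (hA : ∀ i j, A i j = A j i) {θ : ℝ → ι → ℝ}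
    {θ' : ι → ℝ} {K₀ : ℝ} (hθ : ∀ i, HasDerivAt (fun K => θ K i) (θ' i) K₀) :
    HasDerivAt (fun K => ∑ i, ∑ j, A i j * cos (θ K i - θ K j))
      (2 * ∑ i, θ' i * ∑ j, A i j * sin (θ K₀ j - θ K₀ i)) K₀ := by
  have hsin (i j : ι) : sin (θ K₀ j - θ K₀ i) = -sin (θ K₀ i - θ K₀ j) := by
    rw [← sin_neg, neg_sub]
  have hB (i j : ι) : A i j * sin (θ K₀ j - θ K₀ i) = -(A j i * sin (θ K₀ i - θ K₀ j)) := by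
    rw [hA, hsin]; ring
  refine (HasDerivAt.fun_sum fun i _ => HasDerivAt.fun_sum fun j _ =>
    (((hθ i).sub (hθ j)).cos).const_mul (A i j)).congr_deriv ?_
  rw [← sum_sum_mul_sub_of_antisymm hB]
  exact sum_congr rfl fun i _ => sum_congr rfl fun j _ => by rw [Pi.sub_apply, hsin i j]; ring

theorem sum_mul_sin_sub_add_mul_sum_mul_cos_sub_eq_zero {ω : ι → ℝ} {θ : ℝ → ι → ℝ} {θ' : ι → ℝ} {K₀ : ℝ}
    (hss : ∀ᶠ K in 𝓝 K₀, ∀ i, ω i + K * ∑ j, A i j * sin (θ K j - θ K i) = 0)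
    (hθ : ∀ i, HasDerivAt (fun K => θ K i) (θ' i) K₀) (i : ι) :
    ∑ j, A i j * sin (θ K₀ j - θ K₀ i)
      + K₀ * ∑ j, A i j * cos (θ K₀ j - θ K₀ i) * (θ' j - θ' i) = 0 := by
  have hF : HasDerivAt (fun K => ω i + K * ∑ j, A i j * sin (θ K j - θ K i))
      (∑ j, A i j * sin (θ K₀ j - θ K₀ i)
        + K₀ * ∑ j, A i j * cos (θ K₀ j - θ K₀ i) * (θ' j - θ' i)) K₀ := by
    refine (((hasDerivAt_id K₀).mul (HasDerivAt.fun_sum fun j _ =>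
      (((hθ j).sub (hθ i)).sin).const_mul (A i j))).const_add (ω i)).congr_deriv ?_
    simp [mul_assoc]
  exact hF.unique <| (hasDerivAt_const K₀ 0).congr_of_eventuallyEq (hss.mono fun K hK => hK i)

variable [DecidableEq ι] {J : Matrix ι ι ℝ} {θ : ι → ℝ} {K₀ : ℝ}

theorem jacobian_mulVec_apply
    (hJoff : ∀ i j, i ≠ j → J i j = K₀ * A i j * cos (θ i - θ j))
    (hJdiag : ∀ i, J i i = -∑ j ∈ univ.erase i, J i j) (x : ι → ℝ) (i : ι) :
    (J *ᵥ x) i = K₀ * ∑ j, A i j * cos (θ j - θ i) * (x j - x i) := by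
  rw [mulVec_apply_eq_sum_mul_sub hJdiag, mul_sum]
  refine sum_congr rfl fun j _ => ?_
  rcases eq_or_ne i j with rfl | hij
  · simp
  · rw [hJoff i j hij, ← cos_neg, neg_sub]
    ring

end Kuramoto

theorem runi_deriv_formula_general (N : ℕ) [NeZero N]
    (A : Fin N → Fin N → ℝ) (ω : Fin N → ℝ)
    (hAsymm : ∀ i j, A i j = A j i)
    (hk : 0 < ∑ i, ∑ j, A i j)
    (Kc2 : ℝ) (hKc2 : 0 ≤ Kc2)
    -- smooth branch of steady states for K > Kc2
    (θ : ℝ → Fin N → ℝ)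
    (hθdiff : ∀ i, ∀ K > Kc2, DifferentiableAt ℝ (fun K' => θ K' i) K)
    (hss : ∀ K > Kc2, ∀ i, 0 = ω i + K * ∑ j, A i j * Real.sin (θ K j - θ K i))
    (K₀ : ℝ) (hK₀ : Kc2 < K₀)
    -- Jacobian at θ*(K₀) with orthonormal eigenbasis v and eigenvalues λ
    (J : Matrix (Fin N) (Fin N) ℝ)
    (hJoff : ∀ i j, i ≠ j → J i j = K₀ * A i j * Real.cos (θ K₀ i - θ K₀ j))
    (hJdiag : ∀ i, J i i = -∑ j ∈ Finset.univ.erase i, J i j)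
    (v : Fin N → Fin N → ℝ) (lam : Fin N → ℝ)
    (horth : ∀ n p, ∑ i, v n i * v p i = if n = p then 1 else 0)
    (heig : ∀ n, J.mulVec (v n) = lam n • v n)
    (hlam0 : lam 0 = 0) (hlamneg : ∀ n, n ≠ 0 → lam n < 0) :
    HasDerivAt
      (fun K => (1 / ∑ i, ∑ j, A i j) * ∑ i, ∑ j, A i j * Real.cos (θ K i - θ K j))
      (2 / (K₀ ^ 2 * ∑ i, ∑ j, A i j) *
        ∑ n ∈ Finset.univ.erase 0, (∑ i, v n i * ω i) ^ 2 / (-lam n)) K₀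
    ∧ 0 ≤ 2 / (K₀ ^ 2 * ∑ i, ∑ j, A i j) *
        ∑ n ∈ Finset.univ.erase 0, (∑ i, v n i * ω i) ^ 2 / (-lam n) := by
  have hK₀pos : 0 < K₀ := hKc2.trans_lt hK₀
  set θ' : Fin N → ℝ := fun i => deriv (fun K => θ K i) K₀
  have hθ' (i : Fin N) : HasDerivAt (fun K => θ K i) (θ' i) K₀ :=
    (hθdiff i K₀ hK₀).hasDerivAt
  have hss₀ (i : Fin N) : ∑ j, A i j * sin (θ K₀ j - θ K₀ i) = -ω i / K₀ := by
    field_simp; linarith [hss K₀ hK₀ i]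
  have hJθ' : J *ᵥ (K₀ • θ') = ω := funext fun i => by
    have hlin := Kuramoto.sum_mul_sin_sub_add_mul_sum_mul_cos_sub_eq_zero
      ((eventually_gt_nhds hK₀).mono fun K hK i => (hss K hK i).symm) hθ' i
    rw [mulVec_smul, Pi.smul_apply, smul_eq_mul, Kuramoto.jacobian_mulVec_apply hJoff hJdiag]
    linear_combination K₀ * hlin + hss K₀ hK₀ i
  have hωθ' : ω ⬝ᵥ θ' = K₀⁻¹ * ∑ n ∈ univ.erase 0, (∑ i, v n i * ω i) ^ 2 / lam n := by
    rw [eq_inv_mul_iff_mul_eq₀ hK₀pos.ne', ← smul_eq_mul, ← dotProduct_smul,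
      (Kuramoto.jacobian_isSymm hAsymm hJoff).dotProduct_eq_sum_sq_div_of_mulVec_eq horth heig
        hJθ', sum_erase univ (a := 0) (by rw [hlam0, div_zero])]
    rfl
  refine ⟨((Kuramoto.hasDerivAt_sum_mul_cos_sub hAsymm hθ').const_mul _).congr_deriv ?_, ?_⟩
  · have hsum : ∑ i, θ' i * (-ω i / K₀) = -K₀⁻¹ * (ω ⬝ᵥ θ') := by
      rw [dotProduct, mul_sum]
      exact sum_congr rfl fun i _ => by ring
    simp only [hss₀, hsum, hωθ', div_neg, sum_neg_distrib]
    field_simp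
  · refine mul_nonneg (div_nonneg zero_le_two (mul_nonneg (sq_nonneg _) hk.le))
      (sum_nonneg fun n hn => div_nonneg (sq_nonneg _) ?_)
    exact neg_nonneg.mpr (hlamneg n (ne_of_mem_erase hn)).le

/-- Derivative of the universal order parameter along a smooth branch of stable
phase-locked steady states:
`dr_uni/dK = (2/(K² Σ_i k_i)) Σ_{n=2}^N (v_n · ω)²/(−λ_n) ≥ 0`. -/
theorem runi_deriv_formula (N : ℕ) [NeZero N] (hN : 2 ≤ N)
    (A : Fin N → Fin N → ℝ) (ω : Fin N → ℝ)
    (hAsymm : ∀ i j, A i j = A j i) (hAdiag : ∀ i, A i i = 0)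
    (hA01 : ∀ i j, A i j = 0 ∨ A i j = 1)
    (hk : 0 < ∑ i, ∑ j, A i j)
    (Kc2 : ℝ) (hKc2 : 0 ≤ Kc2)
    -- smooth branch of steady states for K > Kc2
    (θ : ℝ → Fin N → ℝ)
    (hθdiff : ∀ i, ∀ K > Kc2, DifferentiableAt ℝ (fun K' => θ K' i) K)
    (hss : ∀ K > Kc2, ∀ i, 0 = ω i + K * ∑ j, A i j * Real.sin (θ K j - θ K i))
    (K₀ : ℝ) (hK₀ : Kc2 < K₀)
    -- Jacobian at θ*(K₀) with orthonormal eigenbasis v and eigenvalues λ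
    (J : Matrix (Fin N) (Fin N) ℝ)
    (hJoff : ∀ i j, i ≠ j → J i j = K₀ * A i j * Real.cos (θ K₀ i - θ K₀ j))
    (hJdiag : ∀ i, J i i = -∑ j ∈ Finset.univ.erase i, J i j)
    (v : Fin N → Fin N → ℝ) (lam : Fin N → ℝ)
    (horth : ∀ n p, ∑ i, v n i * v p i = if n = p then 1 else 0)
    (heig : ∀ n, J.mulVec (v n) = lam n • v n)
    (hv1 : v 0 = fun _ => 1 / Real.sqrt N)
    (hlam0 : lam 0 = 0) (hlamneg : ∀ n, n ≠ 0 → lam n < 0) :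
    HasDerivAt
      (fun K => (1 / ∑ i, ∑ j, A i j) * ∑ i, ∑ j, A i j * Real.cos (θ K i - θ K j))
      (2 / (K₀ ^ 2 * ∑ i, ∑ j, A i j) *
        ∑ n ∈ Finset.univ.erase 0, (∑ i, v n i * ω i) ^ 2 / (-lam n)) K₀
    ∧ 0 ≤ 2 / (K₀ ^ 2 * ∑ i, ∑ j, A i j) *
        ∑ n ∈ Finset.univ.erase 0, (∑ i, v n i * ω i) ^ 2 / (-lam n) :=
  runi_deriv_formula_general N A ω hAsymm hk Kc2 hKc2 θ hθdiff hss K₀ hK₀ J hJoff hJdiag v lam horth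
    heig hlam0 hlamneg
end

section
/- Under the assumptions of the derivative formula, if additionally Σ_i ω_i = 0 and ω ≠ 0, then dr_uni/dK > 0 strictly: the universal order parameter is strictly monotonically increasing in K along the stable phase-locked branch. -/
/-!
Writing `ω` in the orthonormal eigenbasis, its coefficient along the constant vector `v₀` is a
multiple of `Σ ω_i = 0`. Since `ω ≠ 0`, some other coefficient `v_n · ω` is nonzero, and it
contributes a strictly positive term `(v_n · ω)² / (-λ_n)` to a sum of nonnegative terms.
-/

open Matrix Finset

theorem Matrix.eq_zero_of_mul_transpose_eq_one_of_mulVec_eq_zero {ι R : Type*} [Fintype ι]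
    [DecidableEq ι] [CommRing R] {M : Matrix ι ι R} (hM : M * Mᵀ = 1) {x : ι → R}
    (hx : M *ᵥ x = 0) : x = 0 :=
  calc x = (Mᵀ * M) *ᵥ x := by rw [mul_eq_one_comm.mp hM, one_mulVec]
    _ = 0 := by rw [← mulVec_mulVec, hx, mulVec_zero]

theorem Matrix.exists_dotProduct_ne_zero_of_sum_eq_zero {ι R : Type*} [Fintype ι]
    [DecidableEq ι] [CommRing R] {M : Matrix ι ι R} (hM : M * Mᵀ = 1) {i₀ : ι} {c : R}
    (hconst : M i₀ = fun _ => c) {x : ι → R} (hsum : ∑ i, x i = 0) (hx : x ≠ 0) :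
    ∃ n, n ≠ i₀ ∧ M n ⬝ᵥ x ≠ 0 := by
  by_contra! h
  refine hx (eq_zero_of_mul_transpose_eq_one_of_mulVec_eq_zero hM (funext fun n => ?_))
  by_cases hn : n = i₀
  · subst hn
    simp only [mulVec, hconst, dotProduct, ← mul_sum, hsum, mul_zero, Pi.zero_apply]
  · exact h n hn

theorem Finset.sum_sq_div_pos {ι : Type*} {s : Finset ι} {a w : ι → ℝ}
    (hw : ∀ n ∈ s, 0 < w n) (ha : ∃ n ∈ s, a n ≠ 0) : 0 < ∑ n ∈ s, a n ^ 2 / w n := by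
  obtain ⟨n, hns, han⟩ := ha
  refine sum_pos' (fun m hm => div_nonneg (sq_nonneg _) (hw m hm).le) ⟨n, hns, ?_⟩
  exact div_pos (sq_pos_of_ne_zero han) (hw n hns)

theorem runi_deriv_pos_general (N : ℕ) [NeZero N]
    (K : ℝ) (hK : 0 < K) (sumk : ℝ) (hsumk : 0 < sumk)
    (v : Fin N → Fin N → ℝ) (lam : Fin N → ℝ)
    (horth : ∀ n p, ∑ i, v n i * v p i = if n = p then 1 else 0)
    (hv1 : v 0 = fun _ => 1 / Real.sqrt N)
    (hlamneg : ∀ n, n ≠ 0 → lam n < 0)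
    (ω : Fin N → ℝ) (hω0 : ∑ i, ω i = 0) (hω : ω ≠ 0) :
    0 < 2 / (K ^ 2 * sumk) *
        ∑ n ∈ Finset.univ.erase 0, (∑ i, v n i * ω i) ^ 2 / (-lam n) := by
  have hvvT : Matrix.of v * (Matrix.of v)ᵀ = 1 := by
    ext n p
    simpa [mul_apply, one_apply] using horth n p
  obtain ⟨n, hn, hvn⟩ := exists_dotProduct_ne_zero_of_sum_eq_zero hvvT hv1 hω0 hω
  refine mul_pos (by positivity) (sum_sq_div_pos (fun m hm => ?_) ?_)
  · exact neg_pos.mpr (hlamneg m (ne_of_mem_erase hm))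
  · exact ⟨n, mem_erase.mpr ⟨hn, mem_univ n⟩, hvn⟩

/-- If moreover `Σ_i ω_i = 0` and `ω ≠ 0`, the derivative of the universal order
parameter, `(2/(K² Σ_i k_i)) Σ_{n=2}^N (v_n · ω)²/(−λ_n)`, is strictly positive:
`r_uni` is strictly increasing in `K` along the stable phase-locked branch. -/
theorem runi_deriv_pos (N : ℕ) [NeZero N] (hN : 2 ≤ N)
    (K : ℝ) (hK : 0 < K) (sumk : ℝ) (hsumk : 0 < sumk)
    (v : Fin N → Fin N → ℝ) (lam : Fin N → ℝ)
    (horth : ∀ n p, ∑ i, v n i * v p i = if n = p then 1 else 0)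
    (hv1 : v 0 = fun _ => 1 / Real.sqrt N)
    (hlamneg : ∀ n, n ≠ 0 → lam n < 0)
    (ω : Fin N → ℝ) (hω0 : ∑ i, ω i = 0) (hω : ω ≠ 0) :
    0 < 2 / (K ^ 2 * sumk) *
        ∑ n ∈ Finset.univ.erase 0, (∑ i, v n i * ω i) ^ 2 / (-lam n) :=
  runi_deriv_pos_general N K hK sumk hsumk v lam horth hv1 hlamneg ω hω0 hω
end

section
/- The key algebraic step of Lemma 2: for any orthonormal set v_2, …, v_N orthogonal to (1,…,1)^T and any steady state θ*, the identity [Σ_{i,j} A_{i,j} sin(θ_i* − θ_j*)(v_{n,j} − v_{n,i})]² = (4/K²)(v_n · ω)² holds for each n. -/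
/-- Key algebraic step of Lemma 2: for any vector `v` orthogonal to the constant
vector and any steady state `θ*`,
`[Σ_{i,j} A_{i,j} sin(θ_i* − θ_j*)(v_j − v_i)]² = (4/K²)(v · ω)²`. -/
theorem lemma2_algebraic_step (N : ℕ) (A : Fin N → Fin N → ℝ)
    (θ ω : Fin N → ℝ) (K : ℝ) (hK : K ≠ 0)
    (hAsymm : ∀ i j, A i j = A j i) (hAdiag : ∀ i, A i i = 0)
    (hss : ∀ i, 0 = ω i + K * ∑ j, A i j * Real.sin (θ j - θ i))
    (v : Fin N → ℝ) (hv : ∑ i, v i = 0) :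
    (∑ i, ∑ j, A i j * Real.sin (θ i - θ j) * (v j - v i)) ^ 2
      = (4 / K ^ 2) * (∑ i, v i * ω i) ^ 2 := by
  have hsin : ∀ i j : Fin N, Real.sin (θ j - θ i) = -Real.sin (θ i - θ j) := by
    intro i j; rw [← Real.sin_neg, neg_sub]
  have hω : ∀ i, K * ∑ j, A i j * Real.sin (θ i - θ j) = ω i := by
    intro i
    have h := hss i
    have h2 : ∑ j, A i j * Real.sin (θ j - θ i)
        = -∑ j, A i j * Real.sin (θ i - θ j) := by
      rw [← Finset.sum_neg_distrib]
      exact Finset.sum_congr rfl fun j _ => by rw [hsin]; ring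
    rw [h2] at h
    linarith
  have main : (∑ i, ∑ j, A i j * Real.sin (θ i - θ j) * (v j - v i)) * K
      = -2 * ∑ i, v i * ω i := by
    have split : (∑ i, ∑ j, A i j * Real.sin (θ i - θ j) * (v j - v i))
        = (∑ i, ∑ j, A i j * Real.sin (θ i - θ j) * v j)
          - (∑ i, v i * ∑ j, A i j * Real.sin (θ i - θ j)) := by
      rw [← Finset.sum_sub_distrib]
      refine Finset.sum_congr rfl fun i _ => ?_
      rw [Finset.mul_sum, ← Finset.sum_sub_distrib]
      exact Finset.sum_congr rfl fun j _ => by ring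
    have comm : (∑ i, ∑ j, A i j * Real.sin (θ i - θ j) * v j)
        = -∑ i, v i * ∑ j, A i j * Real.sin (θ i - θ j) := by
      rw [Finset.sum_comm, ← Finset.sum_neg_distrib]
      refine Finset.sum_congr rfl fun j _ => ?_
      rw [Finset.mul_sum, ← Finset.sum_neg_distrib]
      refine Finset.sum_congr rfl fun i _ => ?_
      rw [hAsymm i j, hsin j i]; ring
    rw [split, comm]
    have : (∑ i, v i * ∑ j, A i j * Real.sin (θ i - θ j)) * K
        = ∑ i, v i * ω i := by
      rw [Finset.sum_mul]
      exact Finset.sum_congr rfl fun i _ => by rw [← hω i]; ring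
    nlinarith [this]
  have hK2 : K ^ 2 ≠ 0 := pow_ne_zero 2 hK
  have expand : ((∑ i, ∑ j, A i j * Real.sin (θ i - θ j) * (v j - v i)) * K) ^ 2
      = (-2 * ∑ i, v i * ω i) ^ 2 := by rw [main]
  field_simp
  nlinarith [expand]
end
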